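/- arXiv:2204.11468 — 2 statements merged into one kernel-verified Lean document; each statement's English description precedes it below -/
import Mathlib

section
/- Let d ≥ 1 be an integer, r > 0, t ≥ r², and x ∈ ℝ^d. Then ∫_{{y : ‖y‖ ≤ r}} (2πt)^{-d/2} e^{-‖y-x‖²/(2t)} dy ≥ e^{-3/2} v_d r^d (2πt)^{-d/2} e^{-3‖x‖²/(2t)}; equivalently, the left-hand side is at least e^{-3/2} 3^{-d/2} v_d r^d (2πt/3)^{-d/2} e^{-‖x‖²/(2(t/3))}. -/
open MeasureTheory Filter Set Metric
open scoped ENNReal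

/-- The `d`-dimensional heat kernel `p_t(x,y) = (2πt)^{-d/2} exp(-‖x-y‖²/(2t))`. -/
noncomputable def heatKernel (d : ℕ) (t : ℝ) (x y : EuclideanSpace ℝ (Fin d)) : ℝ :=
  (2 * Real.pi * t) ^ (-(d : ℝ) / 2) * Real.exp (-‖x - y‖ ^ 2 / (2 * t))

/-- `u : (0,∞) × ℝ^d → [0,∞)` is a mild solution of `∂ₜu = (1/2)Δu - u²` with initial
data `φ` if it is measurable, nonnegative, and satisfies for all `t > 0`, `x ∈ ℝ^d`:
`u(t,x) + ∫₀ᵗ ∫ p_s(x,y) u(t-s,y)² dy ds = ∫ p_t(x,y) φ(y) dy` (equality in `[0,∞]`). -/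
def IsMildSolution (d : ℕ) (φ : EuclideanSpace ℝ (Fin d) → ℝ)
    (u : ℝ → EuclideanSpace ℝ (Fin d) → ℝ) : Prop :=
  Measurable (Function.uncurry u) ∧
  (∀ t x, 0 ≤ u t x) ∧
  ∀ t x, 0 < t →
    ENNReal.ofReal (u t x) +
        (∫⁻ s in Set.Ioo (0 : ℝ) t, ∫⁻ y,
          ENNReal.ofReal (heatKernel d s x y * u (t - s) y ^ 2)) =
      ∫⁻ y, ENNReal.ofReal (heatKernel d t x y * φ y)

/-- `v_d`: the Lebesgue volume of the unit ball of `ℝ^d`. -/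
noncomputable def unitBallVol (d : ℕ) : ℝ :=
  (volume (Metric.ball (0 : EuclideanSpace ℝ (Fin d)) 1)).toReal

/-!
On the ball `‖y‖ ≤ r ≤ √t` we have `‖y - x‖² ≤ 3‖y‖² + 3‖x‖² ≤ 3t + 3‖x‖²`, so the Gaussian
integrand is bounded below by `(2πt)^{-d/2} e^{-3/2} e^{-3‖x‖²/(2t)}`; integrating this constant
over the ball gives the factor `v_d r^d`.
-/

lemma norm_sub_sq_le_three_mul_add {E : Type*} [SeminormedAddCommGroup E] (x y : E) :
    ‖y - x‖ ^ 2 ≤ 3 * ‖y‖ ^ 2 + 3 * ‖x‖ ^ 2 := by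
  nlinarith [norm_sub_le y x, norm_nonneg (y - x), sq_nonneg (‖x‖ - ‖y‖)]

lemma exp_neg_three_halves_mul_le_exp_neg_norm_sub_sq {E : Type*} [SeminormedAddCommGroup E]
    {t : ℝ} (ht : 0 < t) {x y : E} (hy : ‖y‖ ^ 2 ≤ t) :
    Real.exp (-3 / 2) * Real.exp (-3 * ‖x‖ ^ 2 / (2 * t)) ≤
      Real.exp (-‖y - x‖ ^ 2 / (2 * t)) := by
  rw [← Real.exp_add, Real.exp_le_exp, show (-3 / 2 : ℝ) = -3 * t / (2 * t) by field_simp,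
    ← add_div, div_le_div_iff_of_pos_right (by positivity)]
  linarith [norm_sub_sq_le_three_mul_add x y]

lemma volume_real_closedBall_zero (d : ℕ) {r : ℝ} (hr : 0 ≤ r) :
    volume.real (closedBall (0 : EuclideanSpace ℝ (Fin d)) r) = r ^ d * unitBallVol d := by
  rw [Measure.addHaar_real_closedBall _ _ hr, finrank_euclideanSpace_fin]
  rfl

theorem stmt_5_general (d : ℕ) (r t : ℝ) (hr : 0 < r) (ht : r ^ 2 ≤ t)
    (x : EuclideanSpace ℝ (Fin d)) :
    (∫ y in {y : EuclideanSpace ℝ (Fin d) | ‖y‖ ≤ r},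
        (2 * Real.pi * t) ^ (-(d : ℝ) / 2) * Real.exp (-‖y - x‖ ^ 2 / (2 * t))) ≥
      Real.exp (-3 / 2) * unitBallVol d * r ^ d *
        (2 * Real.pi * t) ^ (-(d : ℝ) / 2) * Real.exp (-3 * ‖x‖ ^ 2 / (2 * t)) := by
  have ht0 : 0 < t := (pow_pos hr 2).trans_le ht
  have hball : {y : EuclideanSpace ℝ (Fin d) | ‖y‖ ≤ r} = closedBall 0 r := by
    ext y; simp
  have hlower : ∀ y ∈ closedBall (0 : EuclideanSpace ℝ (Fin d)) r,
      (2 * Real.pi * t) ^ (-(d : ℝ) / 2) *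
          (Real.exp (-3 / 2) * Real.exp (-3 * ‖x‖ ^ 2 / (2 * t))) ≤
        (2 * Real.pi * t) ^ (-(d : ℝ) / 2) * Real.exp (-‖y - x‖ ^ 2 / (2 * t)) := by
    intro y hy
    rw [mem_closedBall_zero_iff] at hy
    gcongr
    exact exp_neg_three_halves_mul_le_exp_neg_norm_sub_sq ht0
      ((pow_le_pow_left₀ (norm_nonneg y) hy 2).trans ht)
  have hint : IntegrableOn (fun y : EuclideanSpace ℝ (Fin d) =>
      (2 * Real.pi * t) ^ (-(d : ℝ) / 2) * Real.exp (-‖y - x‖ ^ 2 / (2 * t))) (closedBall 0 r) :=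
    (Continuous.continuousOn (by fun_prop)).integrableOn_compact (isCompact_closedBall _ _)
  have hmass := setIntegral_ge_of_const_le_real measurableSet_closedBall
    measure_closedBall_lt_top.ne hlower hint
  rw [volume_real_closedBall_zero d hr.le] at hmass
  rw [hball]
  linarith

/-- Gaussian lower bound for the heat-kernel mass of the ball `B(r)`
when `t ≥ r²`. -/
theorem stmt_5 (d : ℕ) (hd : 1 ≤ d) (r t : ℝ) (hr : 0 < r) (ht : r ^ 2 ≤ t)
    (x : EuclideanSpace ℝ (Fin d)) :
    (∫ y in {y : EuclideanSpace ℝ (Fin d) | ‖y‖ ≤ r},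
        (2 * Real.pi * t) ^ (-(d : ℝ) / 2) * Real.exp (-‖y - x‖ ^ 2 / (2 * t))) ≥
      Real.exp (-3 / 2) * unitBallVol d * r ^ d *
        (2 * Real.pi * t) ^ (-(d : ℝ) / 2) * Real.exp (-3 * ‖x‖ ^ 2 / (2 * t)) :=
  stmt_5_general d r t hr ht x
end

section
/- Let d ≥ 3 be an integer, r > 0, t ≥ r², and x ∈ ℝ^d. Then ∫₀^t ∫_{ℝ^d} p_s(x,y) (∫_{{z : ‖z‖ ≤ r}} p_{t-s}(y,z) dz)² dy ds ≤ 3 r² ∫_{{z : ‖z‖ ≤ r}} p_t(x,z) dz. -/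
open MeasureTheory Filter Set Metric
open scoped ENNReal

/-!
Write `B` for the ball and `P_u 1_B(y) = ∫_B p_u(y,z) dz`. This is at most `1` (total mass) and at
most `(2πu)^{-d/2} vol B ≤ (2πu)^{-d/2} (2r)^d = (a/u)^{d/2}` with `a = 2r²/π`, so
`(P_u 1_B)² ≤ m(u) P_u 1_B` for `m(u) = min 1 ((a/u)^{d/2})`. By Chapman–Kolmogorov,
`∫ p_s(x,y) P_{t-s} 1_B(y) dy = P_t 1_B(x)`, so the left side is at most `P_t 1_B(x) ∫_0^t m`.
For `d ≥ 3` the tail `u^{-d/2}` is integrable, and for `t ≥ a`,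
`∫_0^t m ≤ a + 2a/(d-2) ≤ 3a ≤ 3r²`.
-/

open Real

-- Completing the square in `y`.
lemma norm_sub_sq_div_add_norm_sub_sq_div {E : Type*} [NormedAddCommGroup E]
    [InnerProductSpace ℝ E] {s u : ℝ} (hs : 0 < s) (hu : 0 < u) (x y z : E) :
    ‖x - y‖ ^ 2 / s + ‖y - z‖ ^ 2 / u =
      ‖x - z‖ ^ 2 / (s + u) + ‖(s + u)⁻¹ • (u • x + s • z) - y‖ ^ 2 / (s * u / (s + u)) := by
  have hsu : 0 < s + u := by positivity
  have hxz : x - z = (x - y) + (y - z) := by abel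
  have hm : (s + u)⁻¹ • (u • x + s • z) - y = (s + u)⁻¹ • (u • (x - y) - s • (y - z)) := by
    match_scalars <;> field_simp; ring
  rw [hxz, hm]
  generalize x - y = a
  generalize y - z = b
  rw [norm_add_sq_real, norm_smul, mul_pow, norm_sub_sq_real, norm_smul, norm_smul,
    real_inner_smul_left, real_inner_smul_right, Real.norm_of_nonneg (inv_nonneg.2 hsu.le),
    Real.norm_of_nonneg hu.le, Real.norm_of_nonneg hs.le]
  field_simp
  ring

section HeatKernel

variable {d : ℕ} {s t u : ℝ} (x y : EuclideanSpace ℝ (Fin d))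

lemma heatKernel_eq (t : ℝ) :
    heatKernel d t x y = (2 * π * t) ^ (-(d : ℝ) / 2) * exp (-(2 * t)⁻¹ * ‖x - y‖ ^ 2) := by
  unfold heatKernel
  ring_nf

lemma heatKernel_nonneg (ht : 0 ≤ t) : 0 ≤ heatKernel d t x y := by
  unfold heatKernel
  positivity

lemma heatKernel_le (ht : 0 < t) : heatKernel d t x y ≤ (2 * π * t) ^ (-(d : ℝ) / 2) := by
  rw [heatKernel_eq]
  refine mul_le_of_le_one_right (by positivity) (exp_le_one_iff.2 ?_)
  have : 0 ≤ (2 * t)⁻¹ * ‖x - y‖ ^ 2 := by positivity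
  linarith

lemma continuous_heatKernel (t : ℝ) :
    Continuous fun p : EuclideanSpace ℝ (Fin d) × EuclideanSpace ℝ (Fin d) ↦
      heatKernel d t p.1 p.2 := by
  unfold heatKernel
  fun_prop

lemma integral_heatKernel (ht : 0 < t) : ∫ y, heatKernel d t x y = 1 := by
  simp_rw [heatKernel_eq, integral_const_mul]
  rw [integral_sub_left_eq_self (fun y ↦ exp (-(2 * t)⁻¹ * ‖y‖ ^ 2)),
    GaussianFourier.integral_rexp_neg_mul_sq_norm (by positivity), finrank_euclideanSpace_fin,
    div_inv_eq_mul, show π * (2 * t) = 2 * π * t by ring, neg_div,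
    rpow_neg (by positivity), inv_mul_cancel₀ (by positivity)]

lemma integrable_heatKernel (ht : 0 < t) : Integrable (heatKernel d t x) :=
  .of_integral_ne_zero (by rw [integral_heatKernel x ht]; exact one_ne_zero)

lemma heatKernel_mul_heatKernel (hs : 0 < s) (hu : 0 < u) (z : EuclideanSpace ℝ (Fin d)) :
    heatKernel d s x y * heatKernel d u y z =
      heatKernel d (s + u) x z *
        heatKernel d (s * u / (s + u)) ((s + u)⁻¹ • (u • x + s • z)) y := by
  have hexp := norm_sub_sq_div_add_norm_sub_sq_div hs hu x y z
  unfold heatKernel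
  rw [mul_mul_mul_comm, mul_mul_mul_comm _ (exp _), ← exp_add, ← exp_add,
    ← mul_rpow (by positivity) (by positivity), ← mul_rpow (by positivity) (by positivity)]
  congr 2
  · field_simp
  · simp only [← div_div]
    linear_combination (-1 / 2 : ℝ) * hexp

lemma integral_heatKernel_mul_heatKernel (hs : 0 < s) (hu : 0 < u) (z : EuclideanSpace ℝ (Fin d)) :
    ∫ y, heatKernel d s x y * heatKernel d u y z = heatKernel d (s + u) x z := by
  simp_rw [heatKernel_mul_heatKernel x _ hs hu z, integral_const_mul,
    integral_heatKernel _ (by positivity : 0 < s * u / (s + u)), mul_one]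

lemma setIntegral_heatKernel_nonneg (hu : 0 ≤ u) (A : Set (EuclideanSpace ℝ (Fin d))) :
    0 ≤ ∫ z in A, heatKernel d u y z :=
  integral_nonneg fun z ↦ heatKernel_nonneg y z hu

lemma setIntegral_heatKernel_le_one (hu : 0 < u) (A : Set (EuclideanSpace ℝ (Fin d))) :
    ∫ z in A, heatKernel d u y z ≤ 1 :=
  calc ∫ z in A, heatKernel d u y z ≤ ∫ z, heatKernel d u y z :=
        setIntegral_le_integral (integrable_heatKernel y hu) (.of_forall (heatKernel_nonneg y · hu.le))
    _ = 1 := integral_heatKernel y hu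

lemma stronglyMeasurable_setIntegral_heatKernel (u : ℝ) (A : Set (EuclideanSpace ℝ (Fin d))) :
    StronglyMeasurable fun y ↦ ∫ z in A, heatKernel d u y z :=
  (continuous_heatKernel u).stronglyMeasurable.integral_prod_right'

lemma integrable_heatKernel_mul_setIntegral_heatKernel (hs : 0 < s) (hu : 0 < u)
    (A : Set (EuclideanSpace ℝ (Fin d))) :
    Integrable fun y ↦ heatKernel d s x y * ∫ z in A, heatKernel d u y z :=
  (integrable_heatKernel x hs).mul_bdd
    (stronglyMeasurable_setIntegral_heatKernel u A).aestronglyMeasurable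
    (.of_forall fun y ↦ by
      rw [Real.norm_of_nonneg (setIntegral_heatKernel_nonneg y hu.le A)]
      exact setIntegral_heatKernel_le_one y hu A)

lemma integrable_heatKernel_mul_heatKernel_prod (hs : 0 < s) (hu : 0 < u)
    (A : Set (EuclideanSpace ℝ (Fin d))) :
    Integrable (Function.uncurry fun y z ↦ heatKernel d s x y * heatKernel d u y z)
      (volume.prod (volume.restrict A)) := by
  have hcont : Continuous (Function.uncurry fun y z ↦ heatKernel d s x y * heatKernel d u y z) :=
    ((continuous_heatKernel s).comp (continuous_const.prodMk continuous_fst)).mul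
      (continuous_heatKernel u)
  refine (integrable_prod_iff' hcont.aestronglyMeasurable).2 ⟨.of_forall fun z ↦ ?_, ?_⟩
  · simp_rw [Function.uncurry_apply_pair, heatKernel_mul_heatKernel x _ hs hu z]
    exact (integrable_heatKernel _ (by positivity)).const_mul _
  · have hnonneg (y z : EuclideanSpace ℝ (Fin d)) :
        0 ≤ heatKernel d s x y * heatKernel d u y z :=
      mul_nonneg (heatKernel_nonneg x y hs.le) (heatKernel_nonneg y z hu.le)
    simp_rw [Function.uncurry_apply_pair, Real.norm_of_nonneg (hnonneg _ _),
      integral_heatKernel_mul_heatKernel x hs hu]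
    exact (integrable_heatKernel x (add_pos hs hu)).integrableOn

lemma integral_heatKernel_mul_setIntegral_heatKernel (hs : 0 < s) (hu : 0 < u)
    (A : Set (EuclideanSpace ℝ (Fin d))) :
    ∫ y, heatKernel d s x y * ∫ z in A, heatKernel d u y z =
      ∫ z in A, heatKernel d (s + u) x z :=
  calc ∫ y, heatKernel d s x y * ∫ z in A, heatKernel d u y z
      = ∫ y, ∫ z in A, heatKernel d s x y * heatKernel d u y z := by
        simp_rw [integral_const_mul]
    _ = ∫ z in A, ∫ y, heatKernel d s x y * heatKernel d u y z :=
        integral_integral_swap (integrable_heatKernel_mul_heatKernel_prod x hs hu A)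
    _ = ∫ z in A, heatKernel d (s + u) x z := by
        simp_rw [integral_heatKernel_mul_heatKernel x hs hu]

lemma integral_heatKernel_mul_sq_setIntegral_heatKernel_le (hs : 0 < s) (hu : 0 < u)
    {A : Set (EuclideanSpace ℝ (Fin d))} {m : ℝ} (hm : ∀ y, ∫ z in A, heatKernel d u y z ≤ m) :
    ∫ y, heatKernel d s x y * (∫ z in A, heatKernel d u y z) ^ 2 ≤
      m * ∫ z in A, heatKernel d (s + u) x z := by
  rw [← integral_heatKernel_mul_setIntegral_heatKernel x hs hu, ← integral_const_mul]
  refine integral_mono_of_nonneg (.of_forall fun y ↦ ?_)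
    ((integrable_heatKernel_mul_setIntegral_heatKernel x hs hu A).const_mul m)
    (.of_forall fun y ↦ ?_)
  · have := heatKernel_nonneg x y hs.le
    positivity
  · have hp := heatKernel_nonneg x y hs.le
    have hP := setIntegral_heatKernel_nonneg y hu.le A
    calc heatKernel d s x y * (∫ z in A, heatKernel d u y z) ^ 2
        = heatKernel d s x y * (∫ z in A, heatKernel d u y z) * ∫ z in A, heatKernel d u y z := by
          ring
      _ ≤ heatKernel d s x y * (∫ z in A, heatKernel d u y z) * m :=
          mul_le_mul_of_nonneg_left (hm y) (mul_nonneg hp hP)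
      _ = m * (heatKernel d s x y * ∫ z in A, heatKernel d u y z) := by ring

end HeatKernel

lemma EuclideanSpace.volume_closedBall_le {ι : Type*} [Fintype ι] (x : EuclideanSpace ℝ ι)
    {r : ℝ} (hr : 0 ≤ r) : volume (closedBall x r) ≤ ENNReal.ofReal ((2 * r) ^ Fintype.card ι) :=
  calc volume (closedBall x r) ≤ volume (WithLp.ofLp ⁻¹' closedBall (WithLp.ofLp x) r) :=
        measure_mono fun z hz ↦ (dist_pi_le_iff hr).2 fun i ↦ (PiLp.dist_apply_le z x i).trans hz
    _ = ENNReal.ofReal ((2 * r) ^ Fintype.card ι) := by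
        rw [(PiLp.volume_preserving_ofLp ι).measure_preimage
          measurableSet_closedBall.nullMeasurableSet, Real.volume_pi_closedBall _ hr]

lemma setIntegral_heatKernel_closedBall_le {d : ℕ} {u r : ℝ} (hu : 0 < u) (hr : 0 ≤ r)
    (y c : EuclideanSpace ℝ (Fin d)) :
    ∫ z in closedBall c r, heatKernel d u y z ≤ (2 * r ^ 2 / π / u) ^ ((d : ℝ) / 2) := by
  have hvol := EuclideanSpace.volume_closedBall_le c hr
  rw [Fintype.card_fin] at hvol
  calc ∫ z in closedBall c r, heatKernel d u y z
      ≤ (2 * π * u) ^ (-(d : ℝ) / 2) * volume.real (closedBall c r) :=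
        (le_abs_self _).trans <| norm_setIntegral_le_of_norm_le_const
          (hvol.trans_lt ENNReal.ofReal_lt_top) fun z _ ↦ by
            rw [Real.norm_of_nonneg (heatKernel_nonneg y z hu.le)]
            exact heatKernel_le y z hu
    _ ≤ (2 * π * u) ^ (-(d : ℝ) / 2) * (2 * r) ^ d := by
        gcongr
        exact ENNReal.toReal_le_of_le_ofReal (by positivity) hvol
    _ = (2 * r ^ 2 / π / u) ^ ((d : ℝ) / 2) := by
        rw [← rpow_natCast, show (d : ℝ) = 2 * ((d : ℝ) / 2) by ring, rpow_mul (by positivity),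
          neg_div, mul_div_cancel_left₀ _ two_ne_zero, rpow_neg (by positivity),
          ← inv_rpow (by positivity), ← mul_rpow (by positivity) (by positivity)]
        congr 1
        rw [rpow_two]
        field_simp

section TimeIntegral

variable {a p t : ℝ}

lemma intervalIntegrable_min_one_div_rpow (ha : 0 ≤ a) {b : ℝ} (hb : 0 ≤ b) :
    IntervalIntegrable (fun u ↦ min 1 ((a / u) ^ p)) volume 0 b := by
  have hmeas : Measurable fun u : ℝ ↦ min 1 ((a / u) ^ p) :=
    measurable_const.min ((measurable_const.div measurable_id).pow_const p)
  refine intervalIntegrable_const.mono_fun' (g := fun _ ↦ (1 : ℝ)) hmeas.aestronglyMeasurable ?_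
  filter_upwards [ae_restrict_mem measurableSet_uIoc] with u hu
  rw [uIoc_of_le hb] at hu
  have : 0 ≤ a / u := div_nonneg ha hu.1.le
  rw [Real.norm_of_nonneg (le_min zero_le_one (by positivity))]
  exact min_le_left _ _

lemma intervalIntegral_min_one_div_rpow_le (ha : 0 < a) (hp : 1 < p) (hat : a ≤ t) :
    ∫ u in (0 : ℝ)..t, min 1 ((a / u) ^ p) ≤ p / (p - 1) * a := by
  have hint (b : ℝ) (hb : 0 ≤ b) : IntervalIntegrable (fun u ↦ min 1 ((a / u) ^ p)) volume 0 b :=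
    intervalIntegrable_min_one_div_rpow ha.le hb
  have h0 : (0 : ℝ) ∉ uIcc a t := by
    rw [uIcc_of_le hat]
    exact fun h ↦ ha.not_ge h.1
  have hnear : ∫ u in (0 : ℝ)..a, min 1 ((a / u) ^ p) ≤ a := by
    simpa using intervalIntegral.integral_mono_on ha.le (hint a ha.le) intervalIntegrable_const
      fun u _ ↦ min_le_left 1 ((a / u) ^ p)
  have hfar : ∫ u in a..t, min 1 ((a / u) ^ p) ≤ ∫ u in a..t, a ^ p * u ^ (-p) :=
    intervalIntegral.integral_mono_on hat ((hint a ha.le).symm.trans (hint t (ha.le.trans hat)))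
      ((intervalIntegral.intervalIntegrable_rpow (Or.inr h0)).const_mul _) fun u hu ↦
        (min_le_right _ _).trans_eq <| by
          rw [div_rpow ha.le (ha.trans_le hu.1).le, rpow_neg (ha.trans_le hu.1).le, div_eq_mul_inv]
  have htail : ∫ u in a..t, a ^ p * u ^ (-p) ≤ a / (p - 1) := by
    have hT : 0 ≤ t ^ (-p + 1) := rpow_nonneg (ha.le.trans hat) _
    have hA : a ^ p * a ^ (-p + 1) = a := by rw [← rpow_add ha]; simp
    have hp1 : p - 1 ≠ 0 := by linarith
    have hp1' : -p + 1 ≠ 0 := by linarith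
    rw [intervalIntegral.integral_const_mul, integral_rpow (Or.inr ⟨by linarith, h0⟩)]
    calc a ^ p * ((t ^ (-p + 1) - a ^ (-p + 1)) / (-p + 1))
        = (a ^ p * a ^ (-p + 1) - a ^ p * t ^ (-p + 1)) / (p - 1) := by
          field_simp
          ring
      _ ≤ a / (p - 1) := by
          rw [hA]
          exact div_le_div_of_nonneg_right (sub_le_self _ (by positivity)) (by linarith)
  rw [← intervalIntegral.integral_add_adjacent_intervals (hint a ha.le)
    ((hint a ha.le).symm.trans (hint t (ha.le.trans hat)))]
  have hsplit : p / (p - 1) * a = a + a / (p - 1) := by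
    field_simp [show p - 1 ≠ 0 by linarith]
    ring
  linarith

lemma integrableOn_Ioo_min_one_div_sub_rpow (ha : 0 ≤ a) (ht : 0 ≤ t) :
    IntegrableOn (fun s ↦ min 1 ((a / (t - s)) ^ p)) (Ioo 0 t) := by
  have h := (intervalIntegrable_min_one_div_rpow (p := p) ha ht).comp_sub_left t
  rw [sub_zero, sub_self] at h
  exact (intervalIntegrable_iff_integrableOn_Ioo_of_le ht).1 h.symm

lemma integral_Ioo_min_one_div_sub_rpow_le (ha : 0 < a) (hp : 1 < p) (hat : a ≤ t) :
    ∫ s in Ioo 0 t, min 1 ((a / (t - s)) ^ p) ≤ p / (p - 1) * a := by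
  rw [← integral_Ioc_eq_integral_Ioo, ← intervalIntegral.integral_of_le (ha.le.trans hat),
    intervalIntegral.integral_comp_sub_left (fun u ↦ min 1 ((a / u) ^ p)), sub_self, sub_zero]
  exact intervalIntegral_min_one_div_rpow_le ha hp hat

end TimeIntegral

/-- second-moment bound
`∫₀ᵗ P_s[(P_{t-s} 1_{B(r)})²](x) ds ≤ 3r² · P_t 1_{B(r)}(x)` for `d ≥ 3`, `t ≥ r²`. -/
theorem stmt_8 (d : ℕ) (hd : 3 ≤ d) (r t : ℝ) (hr : 0 < r) (ht : r ^ 2 ≤ t)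
    (x : EuclideanSpace ℝ (Fin d)) :
    (∫ s in Set.Ioo (0 : ℝ) t, ∫ y, heatKernel d s x y *
        (∫ z in {z : EuclideanSpace ℝ (Fin d) | ‖z‖ ≤ r}, heatKernel d (t - s) y z) ^ 2) ≤
      3 * r ^ 2 * ∫ z in {z : EuclideanSpace ℝ (Fin d) | ‖z‖ ≤ r}, heatKernel d t x z := by
  have hball : {z : EuclideanSpace ℝ (Fin d) | ‖z‖ ≤ r} = closedBall 0 r := by ext; simp
  rw [hball]
  set a := 2 * r ^ 2 / π
  set p : ℝ := d / 2 with hp_def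
  set P := ∫ z in closedBall 0 r, heatKernel d t x z
  have ha : 0 < a := by positivity
  have har : a ≤ r ^ 2 := by
    rw [div_le_iff₀ pi_pos]
    nlinarith [pi_gt_three]
  have hp : 3 / 2 ≤ p := by
    rw [hp_def]
    gcongr
    exact_mod_cast hd
  have hp3 : p / (p - 1) ≤ 3 := by
    rw [div_le_iff₀ (by linarith)]
    linarith
  have hat : a ≤ t := har.trans ht
  have hP : 0 ≤ P := setIntegral_heatKernel_nonneg x (ha.le.trans hat) _
  have hpoint : ∀ s ∈ Ioo 0 t, ∫ y, heatKernel d s x y *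
      (∫ z in closedBall 0 r, heatKernel d (t - s) y z) ^ 2 ≤ min 1 ((a / (t - s)) ^ p) * P := by
    rintro s ⟨hs, hst⟩
    have hu : 0 < t - s := sub_pos.2 hst
    simpa only [add_sub_cancel] using
      integral_heatKernel_mul_sq_setIntegral_heatKernel_le x hs hu fun y ↦
        le_min (setIntegral_heatKernel_le_one y hu _)
          (setIntegral_heatKernel_closedBall_le hu hr.le y 0)
  calc _ ≤ ∫ s in Ioo 0 t, min 1 ((a / (t - s)) ^ p) * P :=
        integral_mono_of_nonneg
          ((ae_restrict_mem measurableSet_Ioo).mono fun s hs ↦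
            integral_nonneg fun y ↦ mul_nonneg (heatKernel_nonneg x y hs.1.le) (sq_nonneg _))
          ((integrableOn_Ioo_min_one_div_sub_rpow ha.le (ha.le.trans hat)).mul_const P)
          ((ae_restrict_mem measurableSet_Ioo).mono hpoint)
    _ = (∫ s in Ioo 0 t, min 1 ((a / (t - s)) ^ p)) * P := integral_mul_const _ _
    _ ≤ p / (p - 1) * a * P := by
        gcongr
        exact integral_Ioo_min_one_div_sub_rpow_le ha (by linarith) hat
    _ ≤ 3 * r ^ 2 * P := by gcongr
end
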